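/- In an abelian Polish group X without isolated points (e.g. a nontrivial real linear Polish space), every Haar meager set is meager; in particular X itself is not Haar meager. -/

import Mathlib

/-! The set `M = {(x, k) | f k - x ∈ B}` in `X × K` is Borel and its vertical section at `x` is
`f⁻¹(B + x)`, so `M` is meager by the Kuratowski–Ulam theorem. By the easy half of
Kuratowski–Ulam some horizontal section `{x | f k - x ∈ B}` is meager; it is the image of `B`
under the homeomorphism `x ↦ f k - x`, so `B` is meager. A Polish group is a Baire space, so it
is not meager itself. -/

open Set Pointwise MeasureTheory

/-- A set is Haar meager (Darji) if it is contained in a Borel set `B` such that some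
continuous map from a nonempty compact metric space pulls back every translate of `B`
to a meager set. -/
def HaarMeager {X : Type*} [AddCommGroup X] [TopologicalSpace X] (A : Set X) : Prop :=
  ∃ B : Set X, A ⊆ B ∧ MeasurableSet[borel X] B ∧
    ∃ (K : Type) (_ : MetricSpace K) (_ : CompactSpace K) (_ : Nonempty K) (f : K → X),
      Continuous f ∧ ∀ x : X, IsMeagre (f ⁻¹' (B + {x}))

/-- A set is D-measurable if it is the union of a Borel set and a Haar meager set. -/
def DMeasurable {X : Type*} [AddCommGroup X] [TopologicalSpace X] (A : Set X) : Prop :=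
  ∃ B M : Set X, MeasurableSet[borel X] B ∧ HaarMeager M ∧ A = B ∪ M

open Filter Topology TopologicalSpace

section KuratowskiUlam

variable {X Y : Type*} [TopologicalSpace X] [TopologicalSpace Y]

theorem IsOpen.eventually_dense_preimage_prodMk [SecondCountableTopology Y] {W : Set (X × Y)}
    (hW : IsOpen W) (hWd : Dense W) : ∀ᶠ x in residual X, Dense (Prod.mk x ⁻¹' W) := by
  obtain ⟨b, hbc, -, hb⟩ := exists_countable_basis Y
  have hmeets (V : Set Y) (hV : V ∈ b) :
      ∀ᶠ x in residual X, V.Nonempty → (V ∩ Prod.mk x ⁻¹' W).Nonempty := by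
    by_cases hVne : V.Nonempty
    · have hVo : IsOpen V := hb.isOpen hV
      have hproj : Dense (Prod.fst '' (W ∩ univ ×ˢ V)) := by
        refine dense_iff_inter_open.2 fun u hu hune => ?_
        obtain ⟨p, ⟨hpu, hpV⟩, hpW⟩ :=
          hWd.inter_open_nonempty _ (hu.prod hVo) (hune.prod hVne)
        exact ⟨p.1, hpu, p, ⟨hpW, trivial, hpV⟩, rfl⟩
      filter_upwards [residual_of_dense_open
        (isOpenMap_fst _ (hW.inter (isOpen_univ.prod hVo))) hproj]
      rintro _ ⟨p, ⟨hpW, -, hpV⟩, rfl⟩ -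
      exact ⟨p.2, hpV, hpW⟩
    · exact Eventually.of_forall fun _ h => absurd h hVne
  filter_upwards [(eventually_countable_ball hbc).2 hmeets] with x hx
  exact hb.dense_iff.2 fun V hV hVne => hx V hV hVne

theorem eventually_preimage_prodMk_mem_residual [SecondCountableTopology Y] {s : Set (X × Y)}
    (hs : s ∈ residual (X × Y)) : ∀ᶠ x in residual X, Prod.mk x ⁻¹' s ∈ residual Y := by
  obtain ⟨S, hSo, hSd, hSc, hSs⟩ := mem_residual_iff.1 hs
  filter_upwards [(eventually_countable_ball hSc).2 fun W hW =>
    (hSo W hW).eventually_dense_preimage_prodMk (hSd W hW)] with x hx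
  refine mem_of_superset ((countable_bInter_mem hSc).2 fun W hW => residual_of_dense_open
    ((hSo W hW).preimage (Continuous.prodMk_right x)) (hx W hW)) fun y hy => hSs ?_
  simpa using hy

theorem IsMeagre.eventually_isMeagre_preimage_prodMk [SecondCountableTopology Y]
    {s : Set (X × Y)} (hs : IsMeagre s) : ∀ᶠ x in residual X, IsMeagre (Prod.mk x ⁻¹' s) :=
  eventually_preimage_prodMk_mem_residual hs

theorem IsOpen.eq_empty_of_eventually_isMeagre_preimage_prodMk [BaireSpace X] [BaireSpace Y]
    {U : Set (X × Y)} (hU : IsOpen U) (h : ∀ᶠ x in residual X, IsMeagre (Prod.mk x ⁻¹' U)) :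
    U = ∅ := by
  have hsec : ∀ᶠ x in residual X, Prod.mk x ⁻¹' U = ∅ := h.mono fun x hx =>
    not_nonempty_iff_eq_empty.1 fun hne =>
      not_isMeagre_of_isOpen (hU.preimage (Continuous.prodMk_right x)) hne hx
  have hproj : IsMeagre (Prod.fst '' U) := mem_of_superset hsec <| by
    rintro x hx ⟨p, hpU, rfl⟩
    exact (hx.subset hpU : _)
  exact image_eq_empty.1 <| not_nonempty_iff_eq_empty.1 fun hne =>
    not_isMeagre_of_isOpen (isOpenMap_fst _ hU) hne hproj

theorem BaireMeasurableSet.isMeagre_of_eventually_isMeagre_preimage_prodMk [BaireSpace X]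
    [BaireSpace Y] [SecondCountableTopology Y] {s : Set (X × Y)} (hs : BaireMeasurableSet s)
    (h : ∀ᶠ x in residual X, IsMeagre (Prod.mk x ⁻¹' s)) : IsMeagre s := by
  obtain ⟨U, hU, hsU⟩ := hs.residualEq_isOpen
  have hsecU : ∀ᶠ x in residual X, IsMeagre (Prod.mk x ⁻¹' U) := by
    filter_upwards [h, eventually_preimage_prodMk_mem_residual hsU.mem_iff] with x hx hxU
    filter_upwards [hx, hxU] with y hy hyU
    exact fun hyU' => hy (hyU.2 hyU')
  have hU_empty := hU.eq_empty_of_eventually_isMeagre_preimage_prodMk hsecU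
  filter_upwards [hsU.mem_iff] with p hp
  simpa [hU_empty] using hp

end KuratowskiUlam

theorem HaarMeager.isMeagre {X : Type*} [AddCommGroup X] [TopologicalSpace X]
    [IsTopologicalAddGroup X] [BaireSpace X] [SecondCountableTopology X] {A : Set X}
    (hA : HaarMeager A) : IsMeagre A := by
  obtain ⟨B, hAB, hB, K, _, _, _, f, hf, hsec⟩ := hA
  set M : Set (X × K) := (fun p => f p.2 - p.1) ⁻¹' B
  have hM : BaireMeasurableSet M := by
    borelize (X × K)
    exact MeasurableSet.baireMeasurableSet
      (((hf.comp continuous_snd).sub continuous_fst).borel_measurable hB)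
  have hMsec (x : X) : Prod.mk x ⁻¹' M = f ⁻¹' (B + {x}) := by
    ext k
    simp [M, add_singleton, image_add_right, sub_eq_add_neg]
  have hMmeagre : IsMeagre M :=
    hM.isMeagre_of_eventually_isMeagre_preimage_prodMk (.of_forall fun x => hMsec x ▸ hsec x)
  obtain ⟨k, hk⟩ := (dense_of_mem_residual ((hMmeagre.preimage_of_isOpenMap continuous_swap
    (Homeomorph.prodComm K X).isOpenMap).eventually_isMeagre_preimage_prodMk)).nonempty
  have hk' : IsMeagre (Homeomorph.subLeft (f k) ⁻¹' B) := hk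
  refine IsMeagre.mono hAB ?_
  simpa [preimage_preimage] using hk'.preimage_of_isOpenMap
    (Homeomorph.subLeft (f k)).continuous (Homeomorph.subLeft (f k)).isOpenMap

theorem haarMeager_isMeagre_of_no_isolated_points_general
    (X : Type*) [AddCommGroup X] [TopologicalSpace X] [IsTopologicalAddGroup X]
    [PolishSpace X] :
    (∀ A : Set X, HaarMeager A → IsMeagre A) ∧ ¬ HaarMeager (Set.univ : Set X) :=
  ⟨fun _ hA => hA.isMeagre,
    fun h => not_isMeagre_of_isOpen isOpen_univ univ_nonempty h.isMeagre⟩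

theorem haarMeager_isMeagre_of_no_isolated_points
    (X : Type*) [AddCommGroup X] [TopologicalSpace X] [IsTopologicalAddGroup X]
    [PolishSpace X] (hiso : ∀ x : X, (nhdsWithin x {x}ᶜ).NeBot) :
    (∀ A : Set X, HaarMeager A → IsMeagre A) ∧ ¬ HaarMeager (Set.univ : Set X) :=
  haarMeager_isMeagre_of_no_isolated_points_general X
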